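/- arXiv:1412.3475 — 6 statements merged into one kernel-verified Lean document; each statement's English description precedes it below -/
import Mathlib

section
/- Let n be a positive integer not divisible by 3. The map sending a (3,n)-Dyck path Π to the pair (k,ℓ), where k is the number of cells of λ(Π) in the first column of the lattice and ℓ the number of cells of λ(Π) in the second column, is a bijection from the set of (3,n)-Dyck paths onto the set of pairs of non-negative integers (k,ℓ) with ℓ ≤ ⌊n/3⌋ and ℓ ≤ k ≤ ⌊2n/3⌋. -/
open MvPolynomial

/-- An `(m,n)`-Dyck path: a north/east lattice path from `(0,0)` to `(m,n)` staying
weakly above the diagonal `y = (n/m)x`.  Such a path is encoded by recording, for each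
of the `m` columns (indexed `0,…,m-1` from left to right), the number of cells of that
column lying above the path; this gives an antitone sequence, and the diagonal
condition for the east step in column `i` reads `m * c i ≤ n * (m - 1 - i)`. -/
def DyckPath (m n : ℕ) : Type :=
  {c : Fin m → Fin (n + 1) //
    (∀ i j : Fin m, i ≤ j → (c j : ℕ) ≤ (c i : ℕ)) ∧
      ∀ i : Fin m, m * (c i : ℕ) ≤ n * (m - 1 - (i : ℕ))}

noncomputable instance instFintypeDyckPath (m n : ℕ) : Fintype (DyckPath m n) := by
  classical
  unfold DyckPath
  infer_instance

namespace DyckPath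

variable {m n : ℕ}

/-- `λ(Π)`, the set of cells of the `m × n` lattice lying above the path `Π`.
The cell `(i, j)` (with `i : Fin m`, `j : Fin n`) is the cell in column `i + 1`
(from the left) and row `j + 1` (from the bottom) in the paper's 1-based indexing. -/
def cellsAbove (P : DyckPath m n) : Set (Fin m × Fin n) :=
  {x | n - (P.1 x.1 : ℕ) ≤ (x.2 : ℕ)}

/-- `arm(x)`: the number of cells of `λ(Π)` strictly east of `x` (in the row of `x`). -/
noncomputable def arm (P : DyckPath m n) (x : Fin m × Fin n) : ℕ :=
  {y ∈ P.cellsAbove | x.1 < y.1 ∧ y.2 = x.2}.ncard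

/-- `leg(x)`: the number of cells of `λ(Π)` strictly south of `x` (in the column of `x`). -/
noncomputable def leg (P : DyckPath m n) (x : Fin m × Fin n) : ℕ :=
  {y ∈ P.cellsAbove | y.1 = x.1 ∧ y.2 < x.2}.ncard

end DyckPath

/-- The dinv condition `arm/(leg+1) < m/n < (arm+1)/leg` for a cell with given arm `a`
and leg `l`, the right inequality being interpreted as true when `l = 0`. -/
def dinvCond (m n a l : ℕ) : Prop :=
  (a : ℚ) / ((l : ℚ) + 1) < (m : ℚ) / (n : ℚ) ∧
    (l = 0 ∨ (m : ℚ) / (n : ℚ) < ((a : ℚ) + 1) / (l : ℚ))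

namespace DyckPath

variable {m n : ℕ}

/-- `dinv(Π)`: the number of cells `x ∈ λ(Π)` with
`arm(x)/(leg(x)+1) < m/n < (arm(x)+1)/leg(x)`. -/
noncomputable def dinv (P : DyckPath m n) : ℕ :=
  {x ∈ P.cellsAbove | dinvCond m n (P.arm x) (P.leg x)}.ncard

/-- `area(Π)`: the number of cells of the lattice lying entirely between the path and
the diagonal, i.e. cells lying entirely weakly above the diagonal `y = (n/m)x` and
below the path. -/
noncomputable def area (P : DyckPath m n) : ℕ :=
  {x : Fin m × Fin n | n * ((x.1 : ℕ) + 1) ≤ m * (x.2 : ℕ) ∧ x ∉ P.cellsAbove}.ncard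

end DyckPath

/-- The `(m,n)`-rational `q,t`-Catalan polynomial `C_{m,n}(q,t)`, with `q = X 0` and
`t = X 1`:  `C_{m,n}(q,t) = Σ_Π q^{dinv(Π)} t^{area(Π)}` over all `(m,n)`-Dyck paths. -/
noncomputable def ratCatalan (m n : ℕ) : MvPolynomial (Fin 2) ℤ :=
  ∑ P : DyckPath m n, X 0 ^ P.dinv * X 1 ^ P.area

/-- The rank of the cell `(i, j)` of the `3 × n` lattice: in the paper's 1-based
coordinates `(a, b) = (i+1, j+1)`, this is `R(a,b) = -a·n + 3(b-1)`. -/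
def cellRank (n : ℕ) (x : Fin 3 × Fin n) : ℤ :=
  3 * (x.2 : ℤ) - ((x.1 : ℤ) + 1) * (n : ℤ)

/-- The set of positive ranks of the `3 × n` lattice: these, in increasing order, are
the entries of the rank word. -/
def posRank (n : ℕ) : Set ℤ :=
  {r | 0 < r ∧ ∃ x : Fin 3 × Fin n, cellRank n x = r}

/-- The set of marked ranks of a `(3,n)`-Dyck path: the ranks of the cells above
the path. -/
def markedRank {n : ℕ} (P : DyckPath 3 n) : Set ℤ :=
  cellRank n '' P.cellsAbove

/-- `skips(Π)`: the number of skips of `Π`, i.e. of maximal blocks of consecutive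
unmarked entries of the rank word of `Π` having at least one marked entry to the left
and at least one marked entry to the right.  Each such block is counted through its
rightmost entry `r`: `r` is an unmarked entry, some marked entry lies to its left, and
the next entry of the rank word after `r` is marked. -/
noncomputable def DyckPath.skips {n : ℕ} (P : DyckPath 3 n) : ℕ :=
  {r : ℤ | r ∈ posRank n ∧ r ∉ markedRank P ∧
    (∃ l ∈ markedRank P, l < r) ∧
    ∃ s ∈ markedRank P, r < s ∧ ∀ t ∈ posRank n, r < t → s ≤ t}.ncard

/-!
A Dyck path is stored as its column heights, so the map in question reads off the first two
heights `(c₀, c₁)`. For `m = 3` the diagonal condition forces the last height to vanish and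
otherwise says exactly `3 c₁ ≤ n` and `3 c₀ ≤ 2n`, while monotonicity says `c₁ ≤ c₀`;
the pair `(c₀, c₁)` therefore determines the path and ranges over the stated set.
-/

theorem Fin.ncard_setOf_le_val (n b : ℕ) : {j : Fin n | b ≤ (j : ℕ)}.ncard = n - b := by
  have h := Set.ncard_add_ncard_compl {j : Fin n | (j : ℕ) < b}
  simp only [Set.compl_ofPred, not_lt, Nat.card_eq_fintype_card, Fintype.card_fin] at h
  rw [Set.ncard_eq_toFinset_card', Set.toFinset_ofPred, Fin.card_filter_val_lt] at h
  omega

namespace DyckPath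

variable {m n : ℕ}

theorem ncard_cellsAbove_column (P : DyckPath m n) (i : Fin m) :
    {x ∈ P.cellsAbove | x.1 = i}.ncard = P.1 i := by
  have hcol : {x ∈ P.cellsAbove | x.1 = i} =
      Prod.mk i '' {j : Fin n | n - (P.1 i : ℕ) ≤ (j : ℕ)} := by
    ext ⟨a, b⟩
    simp only [cellsAbove, Set.mem_ofPred_eq, Set.mem_image, Prod.mk.injEq]
    constructor
    · rintro ⟨hb, rfl⟩
      exact ⟨b, hb, rfl, rfl⟩
    · rintro ⟨j, hj, rfl, rfl⟩
      exact ⟨hj, rfl⟩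
  rw [hcol, Set.ncard_image_of_injective _ (Prod.mk_right_injective i), Fin.ncard_setOf_le_val]
  have := (P.1 i).isLt
  omega

theorem height_two_eq_zero (P : DyckPath 3 n) : (P.1 2 : ℕ) = 0 := by
  simpa using P.2.2 2

theorem height_one_le_height_zero (P : DyckPath 3 n) : (P.1 1 : ℕ) ≤ P.1 0 :=
  P.2.1 0 1 (by decide)

theorem three_mul_height_one_le (P : DyckPath 3 n) : 3 * (P.1 1 : ℕ) ≤ n := by
  simpa using P.2.2 1

theorem three_mul_height_zero_le (P : DyckPath 3 n) : 3 * (P.1 0 : ℕ) ≤ 2 * n := by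
  simpa [mul_comm] using P.2.2 0

theorem three_ext {P Q : DyckPath 3 n} (h₀ : (P.1 0 : ℕ) = Q.1 0) (h₁ : (P.1 1 : ℕ) = Q.1 1) :
    P = Q := by
  apply Subtype.ext
  funext i
  apply Fin.ext
  fin_cases i
  · exact h₀
  · exact h₁
  · exact P.height_two_eq_zero.trans Q.height_two_eq_zero.symm

def ofHeights (k l : ℕ) (hlk : l ≤ k) (hl : 3 * l ≤ n) (hk : 3 * k ≤ 2 * n) : DyckPath 3 n :=
  ⟨![⟨k, by omega⟩, ⟨l, by omega⟩, ⟨0, by omega⟩],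
    fun i j hij => by fin_cases i <;> fin_cases j <;> simp_all [Fin.le_def],
    fun i => by fin_cases i <;> simp <;> omega⟩

end DyckPath

theorem bijOn_columnCounts_general (n : ℕ) :
    Set.BijOn
      (fun P : DyckPath 3 n =>
        ({x ∈ P.cellsAbove | x.1 = 0}.ncard, {x ∈ P.cellsAbove | x.1 = 1}.ncard))
      Set.univ
      {p : ℕ × ℕ | p.2 ≤ n / 3 ∧ p.2 ≤ p.1 ∧ p.1 ≤ 2 * n / 3} := by
  simp only [DyckPath.ncard_cellsAbove_column, Nat.le_div_iff_mul_le three_pos, mul_comm _ 3]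
  refine ⟨fun P _ => ?_, fun P _ Q _ h => ?_, ?_⟩
  · exact ⟨P.three_mul_height_one_le, P.height_one_le_height_zero,
      P.three_mul_height_zero_le⟩
  · simp only [Prod.mk.injEq] at h
    exact DyckPath.three_ext h.1 h.2
  · rintro ⟨k, l⟩ ⟨hl, hlk, hk⟩
    exact ⟨DyckPath.ofHeights k l hlk hl hk, Set.mem_univ _, rfl⟩

/-- The map sending a `(3,n)`-Dyck path `Π` to the pair `(k, ℓ)` of
numbers of cells of `λ(Π)` in the first and second columns is a bijection onto the set
of pairs of non-negative integers `(k, ℓ)` with `ℓ ≤ ⌊n/3⌋` and `ℓ ≤ k ≤ ⌊2n/3⌋`. -/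
theorem bijOn_columnCounts (n : ℕ) (hn : 0 < n) (h3 : ¬ (3 ∣ n)) :
    Set.BijOn
      (fun P : DyckPath 3 n =>
        ({x ∈ P.cellsAbove | x.1 = 0}.ncard, {x ∈ P.cellsAbove | x.1 = 1}.ncard))
      Set.univ
      {p : ℕ × ℕ | p.2 ≤ n / 3 ∧ p.2 ≤ p.1 ∧ p.1 ≤ 2 * n / 3} :=
  bijOn_columnCounts_general n
end

section
/- Let n be a positive integer not divisible by 3. The number of (3,n)-Dyck paths equals Σ_{s=0}^{⌊n/3⌋} (n − 3s). -/
open MvPolynomial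

/-!
A `(3,n)`-Dyck path has no cell above it in its last column, so it is determined by the
numbers `a ≥ b` of cells above it in its first two columns, subject only to `3a ≤ 2n` and
`3b ≤ n`. Counting these pairs by `b` gives `Σ_{b ≤ ⌊n/3⌋} (⌊2n/3⌋ + 1 - b)`. When `3 ∤ n`
we have `⌊2n/3⌋ + 1 = n - ⌊n/3⌋`, and both this sum and `Σ_s (n - 3s)` are sums of
`⌊n/3⌋ + 1` terms of arithmetic progressions with the same average.
-/

open Finset

theorem DyckPath.val_last_eq_zero {m n : ℕ} (P : DyckPath (m + 1) n) :
    (P.1 (Fin.last m) : ℕ) = 0 := by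
  have h := P.2.2 (Fin.last m)
  simp only [Fin.val_last, add_tsub_cancel_right, tsub_self, mul_zero, nonpos_iff_eq_zero,
    mul_eq_zero] at h
  omega

def DyckPath.equivPairsThree (n : ℕ) :
    DyckPath 3 n ≃ {p : ℕ × ℕ // p.2 ≤ p.1 ∧ p.1 ≤ 2 * n / 3 ∧ p.2 ≤ n / 3} where
  toFun P := ⟨((P.1 0 : ℕ), (P.1 1 : ℕ)), P.2.1 0 1 (by decide),
    by have := P.2.2 0; simp only [Fin.coe_ofNat_eq_mod, Nat.zero_mod] at this; omega,
    by have := P.2.2 1; simp only [Fin.coe_ofNat_eq_mod, Nat.one_mod] at this; omega⟩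
  invFun p := ⟨![⟨p.1.1, by omega⟩, ⟨p.1.2, by omega⟩, 0], by
    obtain ⟨⟨a, b⟩, hba, ha, hb⟩ := p
    refine ⟨fun i j hij => ?_, fun i => ?_⟩
    · fin_cases i <;> fin_cases j <;> simp_all [Fin.le_def]
    · fin_cases i <;> simp <;> omega⟩
  left_inv P := by
    have h2 := P.val_last_eq_zero
    apply Subtype.ext
    funext i
    fin_cases i <;> simp_all
  right_inv p := rfl

theorem card_pairs_le (A B : ℕ) :
    Nat.card {p : ℕ × ℕ // p.2 ≤ p.1 ∧ p.1 ≤ A ∧ p.2 ≤ B} =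
      ∑ b ∈ range (B + 1), (A + 1 - b) := by
  have hset : {p : ℕ × ℕ | p.2 ≤ p.1 ∧ p.1 ≤ A ∧ p.2 ≤ B} =
      ↑((range (B + 1)).biUnion fun b => Icc b A ×ˢ {b}) := by
    ext ⟨a, b⟩
    simp only [Set.mem_ofPred_eq, mem_coe, mem_biUnion, mem_range, mem_product, mem_Icc,
      mem_singleton]
    constructor
    · rintro ⟨hba, ha, hb⟩
      exact ⟨b, by omega, ⟨hba, ha⟩, rfl⟩
    · rintro ⟨b, hb, ⟨hba, ha⟩, rfl⟩
      exact ⟨hba, ha, by omega⟩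
  rw [← Set.coe_ofPred, hset, Nat.card_coe_set_eq, Set.ncard_coe_finset, card_biUnion]
  · simp
  · intro b _ b' _ hne
    refine disjoint_left.2 fun p hp hp' => hne ?_
    rw [mem_product, mem_singleton] at hp hp'
    rw [← hp.2, hp'.2]

theorem sum_range_sub_sub_eq_sum_range_sub_three_mul (N k : ℕ) (h : 3 * k ≤ N) :
    ∑ b ∈ range (k + 1), (N - k - b) = ∑ s ∈ range (k + 1), (N - 3 * s) := by
  have hGauss : (∑ i ∈ range (k + 1), i) * 2 = (k + 1) * k := by
    simpa only [add_tsub_cancel_right] using sum_range_id_mul_two (k + 1)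
  have hL : ∑ b ∈ range (k + 1), (N - k - b) + ∑ b ∈ range (k + 1), b = (k + 1) * (N - k) := by
    rw [← sum_add_distrib, sum_congr rfl (g := fun _ => N - k) fun b hb => by
      rw [mem_range] at hb; omega]
    simp
  have hR : ∑ s ∈ range (k + 1), (N - 3 * s) + 3 * ∑ s ∈ range (k + 1), s = (k + 1) * N := by
    rw [mul_sum, ← sum_add_distrib, sum_congr rfl (g := fun _ => N) fun s hs => by
      rw [mem_range] at hs; omega]
    simp
  have hsplit : (k + 1) * N = (k + 1) * (N - k) + (k + 1) * k := by
    rw [← mul_add, Nat.sub_add_cancel (by omega)]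
  omega

theorem card_dyckPath_three_general (n : ℕ) (h3 : ¬ (3 ∣ n)) :
    Nat.card (DyckPath 3 n) = ∑ s ∈ Finset.range (n / 3 + 1), (n - 3 * s) := by
  rw [Nat.card_congr (DyckPath.equivPairsThree n), card_pairs_le,
    show 2 * n / 3 + 1 = n - n / 3 by omega]
  exact sum_range_sub_sub_eq_sum_range_sub_three_mul n (n / 3) (by omega)

/-- The number of `(3,n)`-Dyck paths equals
`Σ_{s=0}^{⌊n/3⌋} (n − 3s)`. -/
theorem card_dyckPath_three (n : ℕ) (hn : 0 < n) (h3 : ¬ (3 ∣ n)) :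
    Nat.card (DyckPath 3 n) = ∑ s ∈ Finset.range (n / 3 + 1), (n - 3 * s) :=
  card_dyckPath_three_general n h3
end

section
/- Let n be a positive integer not divisible by 3 and assign to each cell (a,b) of the 3×n lattice the rank R(a,b) = −a·n + 3(b−1). Then all the ranks R(a,b) for 1 ≤ a ≤ 3, 1 ≤ b ≤ n are pairwise distinct; no cell in the third column has positive rank; the positive ranks occurring in the first column are exactly the integers j with 0 < j < 2n and j ≡ 2n (mod 3), of which there are ⌊2n/3⌋; the positive ranks occurring in the second column are exactly the integers j with 0 < j < n and j ≡ n (mod 3), of which there are ⌊n/3⌋; in total there are n − 1 positive ranks. -/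
open MvPolynomial

lemma myaux_set_eq (B : ℤ) (hB : B % 3 ≠ 0) :
    {j : ℤ | 0 < j ∧ j < B ∧ j ≡ B [ZMOD 3]} =
      ↑((Finset.Icc (1:ℤ) (B/3)).image (fun t => B - 3*t)) := by
  ext j
  simp only [Set.mem_setOf_eq, Finset.coe_image, Set.mem_image, Finset.mem_coe,
    Finset.mem_Icc, Int.ModEq]
  constructor
  · rintro ⟨h1, h2, h3'⟩
    exact ⟨(B - j)/3, by omega, by omega⟩
  · rintro ⟨t, ht, rfl⟩
    omega

lemma myaux_count (B : ℤ) (hB : B % 3 ≠ 0) :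
    {j : ℤ | 0 < j ∧ j < B ∧ j ≡ B [ZMOD 3]}.ncard = (B/3).toNat := by
  rw [myaux_set_eq B hB, Set.ncard_coe_finset,
    Finset.card_image_of_injective _ (fun a b h => by omega), Int.card_Icc]
  omega

lemma myaux_fin (B : ℤ) (hB : B % 3 ≠ 0) :
    {j : ℤ | 0 < j ∧ j < B ∧ j ≡ B [ZMOD 3]}.Finite := by
  rw [myaux_set_eq B hB]; exact Finset.finite_toSet _

/-- The ranks `R(a,b) = −a·n + 3(b−1)` of the cells of the `3 × n`
lattice are pairwise distinct; no cell in the third column has positive rank; the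
positive ranks of the first column are exactly the integers `j` with `0 < j < 2n` and
`j ≡ 2n (mod 3)`, of which there are `⌊2n/3⌋`; the positive ranks of the second column
are exactly the integers `j` with `0 < j < n` and `j ≡ n (mod 3)`, of which there are
`⌊n/3⌋`; and in total there are `n − 1` positive ranks. -/
theorem rank_word_structure (n : ℕ) (hn : 0 < n) (h3 : ¬ (3 ∣ n)) :
    Function.Injective (cellRank n) ∧
      (∀ x : Fin 3 × Fin n, x.1 = 2 → ¬ 0 < cellRank n x) ∧
      {r : ℤ | 0 < r ∧ ∃ x : Fin 3 × Fin n, x.1 = 0 ∧ cellRank n x = r} =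
        {j : ℤ | 0 < j ∧ j < 2 * (n : ℤ) ∧ j ≡ 2 * (n : ℤ) [ZMOD 3]} ∧
      {r : ℤ | 0 < r ∧ ∃ x : Fin 3 × Fin n, x.1 = 0 ∧ cellRank n x = r}.ncard =
        2 * n / 3 ∧
      {r : ℤ | 0 < r ∧ ∃ x : Fin 3 × Fin n, x.1 = 1 ∧ cellRank n x = r} =
        {j : ℤ | 0 < j ∧ j < (n : ℤ) ∧ j ≡ (n : ℤ) [ZMOD 3]} ∧
      {r : ℤ | 0 < r ∧ ∃ x : Fin 3 × Fin n, x.1 = 1 ∧ cellRank n x = r}.ncard = n / 3 ∧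
      (posRank n).ncard = n - 1 := by

  have hn3 : (n:ℤ) % 3 ≠ 0 := by omega
  have hdvd : ¬ (3:ℤ) ∣ (n:ℤ) := by omega
  have hinj : Function.Injective (cellRank n) := by
    rintro ⟨a, j⟩ ⟨b, k⟩ h
    simp only [cellRank] at h
    have h1 : (3:ℤ) ∣ ((a.val:ℤ) - (b.val:ℤ)) * n := ⟨(j.val:ℤ) - k.val, by ring_nf; ring_nf at h; linarith⟩
    have h2 := (Int.prime_three.dvd_mul.mp h1).resolve_right hdvd
    have ha := a.isLt; have hb := b.isLt
    have hab : a = b := by ext; omega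
    subst hab
    have : j = k := by ext; omega
    subst this; rfl
  have hcol2 : ∀ x : Fin 3 × Fin n, x.1 = 2 → ¬ 0 < cellRank n x := by
    rintro ⟨a, j⟩ ha h
    subst ha
    simp only [cellRank] at h
    have := j.isLt
    omega
  have hset0 : {r : ℤ | 0 < r ∧ ∃ x : Fin 3 × Fin n, x.1 = 0 ∧ cellRank n x = r} =
      {j : ℤ | 0 < j ∧ j < 2 * (n : ℤ) ∧ j ≡ 2 * (n : ℤ) [ZMOD 3]} := by
    ext r
    simp only [Set.mem_setOf_eq, Int.ModEq]
    constructor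
    · rintro ⟨hr, ⟨a, j⟩, ha, rfl⟩
      subst ha
      simp only [cellRank] at hr ⊢
      have := j.isLt
      refine ⟨hr, by omega, by omega⟩
    · rintro ⟨h1, h2, hm⟩
      refine ⟨h1, ⟨0, ⟨((r + n)/3).toNat, by omega⟩⟩, rfl, ?_⟩
      simp only [cellRank]
      omega
  have hset1 : {r : ℤ | 0 < r ∧ ∃ x : Fin 3 × Fin n, x.1 = 1 ∧ cellRank n x = r} =
      {j : ℤ | 0 < j ∧ j < (n : ℤ) ∧ j ≡ (n : ℤ) [ZMOD 3]} := by
    ext r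
    simp only [Set.mem_setOf_eq, Int.ModEq]
    constructor
    · rintro ⟨hr, ⟨a, j⟩, ha, rfl⟩
      subst ha
      simp only [cellRank] at hr ⊢
      have := j.isLt
      refine ⟨hr, by omega, by omega⟩
    · rintro ⟨h1, h2, hm⟩
      refine ⟨h1, ⟨1, ⟨((r + 2*n)/3).toNat, by omega⟩⟩, rfl, ?_⟩
      simp only [cellRank]
      omega
  have hcnt0 : {r : ℤ | 0 < r ∧ ∃ x : Fin 3 × Fin n, x.1 = 0 ∧ cellRank n x = r}.ncard =
      2 * n / 3 := by
    rw [hset0, myaux_count _ (by omega)]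
    omega
  have hcnt1 : {r : ℤ | 0 < r ∧ ∃ x : Fin 3 × Fin n, x.1 = 1 ∧ cellRank n x = r}.ncard =
      n / 3 := by
    rw [hset1, myaux_count _ (by omega)]
    omega
  refine ⟨hinj, hcol2, hset0, hcnt0, hset1, hcnt1, ?_⟩
  have hunion : posRank n =
      {r : ℤ | 0 < r ∧ ∃ x : Fin 3 × Fin n, x.1 = 0 ∧ cellRank n x = r} ∪
      {r : ℤ | 0 < r ∧ ∃ x : Fin 3 × Fin n, x.1 = 1 ∧ cellRank n x = r} := by
    ext r
    simp only [posRank, Set.mem_setOf_eq, Set.mem_union]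
    constructor
    · rintro ⟨hr, x, hx⟩
      have h3lt := x.1.isLt
      have hx1 : x.1 = 0 ∨ x.1 = 1 ∨ x.1 = 2 := by
        rcases x with ⟨a, j⟩
        have := a.isLt
        have h' : a.val = 0 ∨ a.val = 1 ∨ a.val = 2 := by omega
        rcases h' with h | h | h
        · exact Or.inl (by ext; simpa using h)
        · exact Or.inr (Or.inl (by ext; simpa using h))
        · exact Or.inr (Or.inr (by ext; simpa using h))
      rcases hx1 with h | h | h
      · exact Or.inl ⟨hr, x, h, hx⟩
      · exact Or.inr ⟨hr, x, h, hx⟩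
      · exact absurd (hx ▸ hr) (hcol2 x h)
    · rintro (⟨hr, x, _, hx⟩ | ⟨hr, x, _, hx⟩) <;> exact ⟨hr, x, hx⟩
  rw [hunion, Set.ncard_union_eq ?_ ?_ ?_, hcnt0, hcnt1]
  · omega
  · rw [hset0, hset1]
    rw [Set.disjoint_left]
    rintro j ⟨_, _, hj0⟩ ⟨_, _, hj1⟩
    simp only [Int.ModEq] at hj0 hj1
    omega
  · rw [hset0]; exact myaux_fin _ (by omega)
  · rw [hset1]; exact myaux_fin _ (by omega)
end

section
/- Let n be a positive integer not divisible by 3 and let Π be a (3,n)-Dyck path. Then every cell of λ(Π) has positive rank, and area(Π) equals the number of cells of the 3×n lattice that have positive rank and do not belong to λ(Π) (i.e., lie below Π). -/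
open MvPolynomial

/-- Every cell of `λ(Π)` has positive rank, and `area(Π)` equals the
number of cells of the `3 × n` lattice with positive rank not belonging to `λ(Π)`. -/
theorem rank_pos_of_above_and_area_eq (n : ℕ) (hn : 0 < n) (h3 : ¬ (3 ∣ n))
    (P : DyckPath 3 n) :
    (∀ x ∈ P.cellsAbove, 0 < cellRank n x) ∧
      P.area = {x : Fin 3 × Fin n | 0 < cellRank n x ∧ x ∉ P.cellsAbove}.ncard := by
  have key : ∀ (i : Fin 3) (j : Fin n), n * ((i : ℕ) + 1) ≠ 3 * (j : ℕ) := by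
    intro i j h
    have hd : (3 : ℕ) ∣ n * ((i : ℕ) + 1) := ⟨j, h⟩
    rcases (Nat.Prime.dvd_mul (by norm_num)).1 hd with h1 | h2
    · exact h3 h1
    · have hi := i.isLt
      have hj := j.isLt
      have hi2 : (i : ℕ) = 2 := by omega
      rw [hi2] at h
      omega
  obtain ⟨c, hmono, hdiag⟩ := P
  have main : ∀ (i : Fin 3) (j : Fin n),
      ((i, j) ∈ DyckPath.cellsAbove ⟨c, hmono, hdiag⟩ → 0 < cellRank n (i, j)) ∧
      (n * ((i : ℕ) + 1) ≤ 3 * (j : ℕ) ↔ 0 < cellRank n (i, j)) := by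
    intro i j
    have hc := (c i).isLt
    have hd := hdiag i
    have hk := key i j
    have hj := j.isLt
    simp only [DyckPath.cellsAbove, cellRank, Set.mem_setOf_eq]
    constructor
    · intro hx
      have hx' : n - (c i : ℕ) ≤ (j : ℕ) := hx
      fin_cases i <;> simp_all <;> push_cast <;> omega
    · fin_cases i <;> simp_all <;> push_cast <;> omega
  constructor
  · rintro ⟨i, j⟩ hx
    exact (main i j).1 hx
  · unfold DyckPath.area
    congr 1
    ext ⟨i, j⟩
    simp only [Set.mem_setOf_eq]
    have := (main i j).2
    tauto
end

section
/- Let m and n be coprime positive integers. Then C_{m,n}(q,t) = C_{n,m}(q,t); indeed, there is a bijection between (m,n)-Dyck paths and (n,m)-Dyck paths preserving both the area and dinv statistics. -/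
open MvPolynomial

/-!
Reflect the `m × n` grid in its anti-diagonal, `(i, j) ↦ (n-1-j, m-1-i)`. It carries the cells
above an `(m,n)`-Dyck path onto the cells above an `(n,m)`-Dyck path (the conjugate partition,
read in the rotated frame), and it carries the diagonal of the `m × n` rectangle onto that of the
`n × m` one, so it preserves area. It exchanges arm and leg, and the dinv condition, once cleared
of denominators, reads `n·arm < m·(leg+1) ∧ m·leg < n·(arm+1)`, which is invariant under
`(m, n, arm, leg) ↦ (n, m, leg, arm)`.
-/

open Finset

lemma Nat.mul_sub_le_mul_sub_iff {a b c d : ℕ} (hc : c ≤ b) (hd : d ≤ a) :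
    a * (b - c) ≤ b * (a - d) ↔ b * d ≤ a * c := by
  zify [hc, hd]
  constructor <;> intro h <;> linarith

lemma Fin.val_lt_card_filter_iff {m : ℕ} {p : Fin m → Prop} [DecidablePred p]
    (hp : ∀ i j, i ≤ j → p j → p i) (i : Fin m) : (i : ℕ) < #{j | p j} ↔ p i := by
  constructor
  · intro hi
    by_contra hpi
    have hsub : ({j | p j} : Finset (Fin m)) ⊆ Iio i := fun j hj => by
      simp only [mem_filter, mem_univ, true_and] at hj
      exact mem_Iio.mpr (lt_of_not_ge fun hij => hpi (hp i j hij hj))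
    have := card_le_card hsub
    rw [Fin.card_Iio] at this
    omega
  · intro hpi
    have hsub : Iic i ⊆ ({j | p j} : Finset (Fin m)) := fun j hj => by
      simpa using hp j i (mem_Iic.mp hj) hpi
    have := card_le_card hsub
    rw [Fin.card_Iic] at this
    omega

namespace DyckPath

variable {m n : ℕ}

lemma antitone_val (P : DyckPath m n) {i j : Fin m} (hij : i ≤ j) :
    (P.1 j : ℕ) ≤ P.1 i :=
  P.2.1 i j hij

lemma val_le (P : DyckPath m n) (i : Fin m) : (P.1 i : ℕ) ≤ n :=
  Nat.lt_succ_iff.mp (P.1 i).2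

lemma mk_mem_cellsAbove_iff (P : DyckPath m n) (i : Fin m) (j : Fin n) :
    (i, j) ∈ P.cellsAbove ↔ n - P.1 i ≤ (j : ℕ) :=
  Iff.rfl

lemma mul_succ_le_mul_of_mem_cellsAbove (P : DyckPath m n) {x : Fin m × Fin n}
    (hx : x ∈ P.cellsAbove) : n * ((x.1 : ℕ) + 1) ≤ m * x.2 := by
  obtain ⟨⟨i, hi⟩, j⟩ := x
  rw [← Nat.mul_sub_le_mul_sub_iff j.2.le hi]
  rw [mk_mem_cellsAbove_iff] at hx
  calc m * (n - j) ≤ m * P.1 ⟨i, hi⟩ := Nat.mul_le_mul_left m (by omega)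
    _ ≤ n * (m - 1 - i) := P.2.2 ⟨i, hi⟩
    _ = n * (m - (i + 1)) := by rw [Nat.sub_sub, Nat.add_comm 1]

def conjCol (P : DyckPath m n) (k : Fin n) : ℕ :=
  #{i : Fin m | (k : ℕ) < P.1 i}

lemma lt_conjCol_iff (P : DyckPath m n) (k : Fin n) (i : Fin m) :
    (i : ℕ) < P.conjCol k ↔ (k : ℕ) < P.1 i :=
  Fin.val_lt_card_filter_iff (fun _ _ hij h => h.trans_le (P.antitone_val hij)) i

lemma conjCol_le (P : DyckPath m n) (k : Fin n) : P.conjCol k ≤ m :=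
  (card_filter_le _ _).trans (card_fin m).le

lemma conjCol_anti (P : DyckPath m n) {k k' : Fin n} (hkk' : k ≤ k') :
    P.conjCol k' ≤ P.conjCol k :=
  card_le_card fun i hi => by
    simp only [mem_filter, mem_univ, true_and] at hi ⊢
    exact lt_of_le_of_lt (Fin.le_def.mp hkk') hi

lemma mul_conjCol_le (P : DyckPath m n) (k : Fin n) :
    n * P.conjCol k ≤ m * (n - 1 - k) := by
  obtain hzero | hpos := Nat.eq_zero_or_pos (P.conjCol k)
  · simp [hzero]
  · -- the last column counted by `conjCol k` has a cell above the path in row `k.rev`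
    let i : Fin m := ⟨P.conjCol k - 1, by have := P.conjCol_le k; omega⟩
    have hk : (k : ℕ) < P.1 i := (P.lt_conjCol_iff k i).mp (by simp [i]; omega)
    have hcell : (i, k.rev) ∈ P.cellsAbove := by
      rw [mk_mem_cellsAbove_iff, Fin.val_rev]; omega
    have := P.mul_succ_le_mul_of_mem_cellsAbove hcell
    rw [Fin.val_rev] at this
    simp only [i] at this
    rwa [Nat.sub_add_cancel hpos, ← Nat.sub_sub, Nat.sub_right_comm] at this

def conj (P : DyckPath m n) : DyckPath n m :=
  ⟨fun k => ⟨P.conjCol k, Nat.lt_succ_of_le (P.conjCol_le k)⟩,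
    fun _ _ => P.conjCol_anti, P.mul_conjCol_le⟩

lemma conj_val (P : DyckPath m n) (k : Fin n) : (P.conj.1 k : ℕ) = P.conjCol k :=
  rfl

lemma conj_conj (P : DyckPath m n) : P.conj.conj = P := by
  refine Subtype.ext (funext fun i => Fin.ext ?_)
  change #{k : Fin n | (i : ℕ) < P.conj.1 k} = P.1 i
  simp_rw [conj_val, P.lt_conjCol_iff, Fin.card_filter_val_lt]
  exact min_eq_right (P.val_le i)

variable (m n) in
def conjEquiv : DyckPath m n ≃ DyckPath n m :=
  ⟨conj, conj, conj_conj, conj_conj⟩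

lemma mk_rev_mem_cellsAbove_conj_iff (P : DyckPath m n) (i : Fin m) (j : Fin n) :
    (j.rev, i.rev) ∈ P.conj.cellsAbove ↔ (i, j) ∈ P.cellsAbove := by
  have h := P.lt_conjCol_iff j.rev i
  have := P.conjCol_le j.rev
  have := P.val_le i
  rw [Fin.val_rev] at h
  rw [mk_mem_cellsAbove_iff, mk_mem_cellsAbove_iff, conj_val, Fin.val_rev]
  omega

end DyckPath

def antidiagReflection (m n : ℕ) : Fin m × Fin n ≃ Fin n × Fin m :=
  (Equiv.prodComm _ _).trans (Fin.revPerm.prodCongr Fin.revPerm)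

@[simp]
lemma antidiagReflection_apply {m n : ℕ} (x : Fin m × Fin n) :
    antidiagReflection m n x = (x.2.rev, x.1.rev) :=
  rfl

lemma Equiv.ncard_preimage {α β : Type*} (e : α ≃ β) (s : Set β) :
    (e ⁻¹' s).ncard = s.ncard :=
  Set.ncard_preimage_of_injective_subset_range e.injective (by simp)

lemma mul_rev_succ_le_mul_rev_iff {m n : ℕ} (i : Fin m) (j : Fin n) :
    m * ((j.rev : ℕ) + 1) ≤ n * i.rev ↔ n * ((i : ℕ) + 1) ≤ m * j := by
  rw [Fin.val_rev, Fin.val_rev, ← Nat.mul_sub_le_mul_sub_iff j.2.le i.2,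
    show n - (j + 1) + 1 = n - j by omega]

lemma dinvCond_iff {m n : ℕ} (hn : 0 < n) (a l : ℕ) :
    dinvCond m n a l ↔ n * a < m * (l + 1) ∧ m * l < n * (a + 1) := by
  have hn' : (0 : ℚ) < n := by exact_mod_cast hn
  rw [dinvCond, div_lt_div_iff₀ (by positivity) hn', mul_comm (a : ℚ)]
  refine and_congr (by exact_mod_cast Iff.rfl) ?_
  obtain rfl | hl := Nat.eq_zero_or_pos l
  · simpa using hn
  · rw [div_lt_div_iff₀ hn' (by positivity)]
    simp only [hl.ne', false_or, mul_comm _ (n : ℚ)]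
    exact_mod_cast Iff.rfl

lemma dinvCond_comm {m n : ℕ} (hm : 0 < m) (hn : 0 < n) (a l : ℕ) :
    dinvCond n m l a ↔ dinvCond m n a l := by
  rw [dinvCond_iff hm, dinvCond_iff hn, and_comm]

namespace DyckPath

variable {m n : ℕ}

lemma arm_conj (P : DyckPath m n) (x : Fin m × Fin n) :
    P.conj.arm (antidiagReflection m n x) = P.leg x := by
  rw [arm, leg, ← Equiv.ncard_preimage (antidiagReflection m n)]
  congr 1
  ext y
  simp [mk_rev_mem_cellsAbove_conj_iff, Fin.rev_lt_rev, Fin.rev_inj, and_comm]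

lemma leg_conj (P : DyckPath m n) (x : Fin m × Fin n) :
    P.conj.leg (antidiagReflection m n x) = P.arm x := by
  rw [arm, leg, ← Equiv.ncard_preimage (antidiagReflection m n)]
  congr 1
  ext y
  simp [mk_rev_mem_cellsAbove_conj_iff, Fin.rev_lt_rev, Fin.rev_inj, and_comm]

lemma area_conj (P : DyckPath m n) : P.conj.area = P.area := by
  rw [area, area, ← Equiv.ncard_preimage (antidiagReflection m n)]
  congr 1
  ext y
  simp only [Set.mem_preimage, Set.mem_ofPred_eq, antidiagReflection_apply,
    mk_rev_mem_cellsAbove_conj_iff, mul_rev_succ_le_mul_rev_iff]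

lemma dinv_conj (P : DyckPath m n) : P.conj.dinv = P.dinv := by
  rw [dinv, dinv, ← Equiv.ncard_preimage (antidiagReflection m n)]
  congr 1
  ext x
  simp only [Set.mem_preimage, Set.mem_ofPred_eq, arm_conj, leg_conj,
    dinvCond_comm x.1.pos x.2.pos]
  simp [mk_rev_mem_cellsAbove_conj_iff]

end DyckPath

theorem ratCatalan_symm_mn_general (m n : ℕ) :
    ratCatalan m n = ratCatalan n m ∧
      ∃ e : DyckPath m n ≃ DyckPath n m,
        ∀ P : DyckPath m n, (e P).area = P.area ∧ (e P).dinv = P.dinv := by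
  refine ⟨Fintype.sum_equiv (DyckPath.conjEquiv m n) _ _ fun P => ?_,
    DyckPath.conjEquiv m n, fun P => ⟨P.area_conj, P.dinv_conj⟩⟩
  simp only [DyckPath.conjEquiv, Equiv.coe_fn_mk, P.area_conj, P.dinv_conj]

/-- For coprime positive integers `m` and `n`,
`C_{m,n}(q,t) = C_{n,m}(q,t)`; indeed, there is a bijection between `(m,n)`-Dyck paths
and `(n,m)`-Dyck paths preserving both the area and dinv statistics. -/
theorem ratCatalan_symm_mn (m n : ℕ) (hm : 0 < m) (hn : 0 < n)
    (hco : Nat.Coprime m n) :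
    ratCatalan m n = ratCatalan n m ∧
      ∃ e : DyckPath m n ≃ DyckPath n m,
        ∀ P : DyckPath m n, (e P).area = P.area ∧ (e P).dinv = P.dinv :=
  ratCatalan_symm_mn_general m n
end

section
/- Let n be a positive integer not divisible by 3 and let Π be a (3,n)-Dyck path. Then it is impossible that λ(Π) simultaneously contains a cell x in the first column with arm(x) = 1 and leg(x) < n/3 − 1 and a cell y in the first column with arm(y) = 0 and leg(y) > n/3. -/
open MvPolynomial

/-- `λ(Π)` cannot simultaneously contain a first-column cell `x` with
`arm(x) = 1` and `leg(x) < n/3 − 1` and a first-column cell `y` with `arm(y) = 0` and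
`leg(y) > n/3`. -/
theorem not_both_cases (n : ℕ) (hn : 0 < n) (h3 : ¬ (3 ∣ n)) (P : DyckPath 3 n) :
    ¬ ((∃ x ∈ P.cellsAbove, x.1 = 0 ∧ P.arm x = 1 ∧
          (P.leg x : ℚ) < (n : ℚ) / 3 - 1) ∧
        ∃ y ∈ P.cellsAbove, y.1 = 0 ∧ P.arm y = 0 ∧
          (n : ℚ) / 3 < (P.leg y : ℚ)) := by
  rintro ⟨⟨x, hx, hx0, harm, hlegx⟩, ⟨y, hy, hy0, harm0, hlegy⟩⟩
  have hS : {z ∈ P.cellsAbove | x.1 < z.1 ∧ z.2 = x.2}.Nonempty := by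
    apply Set.nonempty_of_ncard_ne_zero
    have h : {z ∈ P.cellsAbove | x.1 < z.1 ∧ z.2 = x.2}.ncard = P.arm x := rfl
    rw [h, harm]; exact one_ne_zero
  obtain ⟨z, hzc, hz1, hz2⟩ := hS
  have h1le : (1 : Fin 3) ≤ z.1 := by rw [hx0] at hz1; exact hz1
  have hc : (P.1 z.1 : ℕ) ≤ (P.1 1 : ℕ) := P.2.1 1 z.1 h1le
  have hzmem : n - (P.1 z.1 : ℕ) ≤ (z.2 : ℕ) := hzc
  have hx2 : n - (P.1 (1 : Fin 3) : ℕ) ≤ (x.2 : ℕ) := by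
    calc n - (P.1 (1 : Fin 3) : ℕ) ≤ n - (P.1 z.1 : ℕ) := Nat.sub_le_sub_left hc n
    _ ≤ (z.2 : ℕ) := hzmem
    _ = (x.2 : ℕ) := by rw [hz2]
  have hT : {z ∈ P.cellsAbove | y.1 < z.1 ∧ z.2 = y.2} = ∅ := by
    have h : {z ∈ P.cellsAbove | y.1 < z.1 ∧ z.2 = y.2}.ncard = P.arm y := rfl
    exact (Set.ncard_eq_zero (Set.toFinite _)).mp (h.trans harm0)
  have hy2 : (y.2 : ℕ) < n - (P.1 (1 : Fin 3) : ℕ) := by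
    by_contra h
    push_neg at h
    have hm : ((1 : Fin 3), y.2) ∈ {z ∈ P.cellsAbove | y.1 < z.1 ∧ z.2 = y.2} :=
      ⟨h, by rw [hy0]; show (0 : Fin 3) < 1; decide, rfl⟩
    rw [hT] at hm
    exact hm
  have hyx : (y.2 : ℕ) < (x.2 : ℕ) := lt_of_lt_of_le hy2 hx2
  have hsub : insert y {z ∈ P.cellsAbove | z.1 = y.1 ∧ z.2 < y.2} ⊆
      {z ∈ P.cellsAbove | z.1 = x.1 ∧ z.2 < x.2} := by
    rintro w (rfl | ⟨hwc, hw1, hw2⟩)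
    · exact ⟨hy, hy0.trans hx0.symm, hyx⟩
    · exact ⟨hwc, hw1.trans (hy0.trans hx0.symm), lt_trans hw2 hyx⟩
  have hnot : y ∉ {z ∈ P.cellsAbove | z.1 = y.1 ∧ z.2 < y.2} :=
    fun h => lt_irrefl _ h.2.2
  have hcard := Set.ncard_le_ncard hsub (Set.toFinite _)
  rw [Set.ncard_insert_of_notMem hnot (Set.toFinite _)] at hcard
  have hlegs : P.leg y + 1 ≤ P.leg x := hcard
  have hq : (P.leg x : ℚ) < (P.leg y : ℚ) := by linarith
  have hfin := Nat.cast_lt (α := ℚ) |>.mp hq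
  omega
end
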